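/- Let α > −1 and β > −1 be real numbers and n ≥ 1 an integer. Then Σ_{j=1}^{n} [(β+2)_{j−1} (α+β+2)_{j−1} / ((α+1)_{j−1} (j−1)!)] (2j+α+β) = (α+β+2) (β+3)_{n−1} (α+β+3)_{n−1} / ((α+1)_{n−1} (n−1)!). -/

import Mathlib

/-!
With `a = α + 1`, `b = β + 2` and `c = a + b - 1`, the `k`-th summand is
`(b)_k (c)_k / ((a)_k k!) (2k + c)` and the right-hand side is
`T m = c (b+1)_m (c+1)_m / ((a)_m m!)` with `m = n - 1`. The sum telescopes:
`T k - T (k-1)` equals the `k`-th summand because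
`(b + k)(c + k) - (a + k - 1) k = b (2k + c)`, which is exactly the relation `c = a + b - 1`.
-/

/-- The Pochhammer symbol (rising factorial) `(a)_k = a (a+1) ⋯ (a+k-1)`. -/
noncomputable def poch (a : ℝ) (k : ℕ) : ℝ := (ascPochhammer ℝ k).eval a

theorem poch_zero (a : ℝ) : poch a 0 = 1 := by
  simp [poch]

theorem poch_succ (a : ℝ) (k : ℕ) : poch a (k + 1) = poch a k * (a + k) :=
  ascPochhammer_succ_eval k a

theorem poch_succ_left (a : ℝ) (k : ℕ) : poch a (k + 1) = a * poch (a + 1) k := by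
  simp [poch, ascPochhammer_succ_left, Polynomial.eval_comp]

theorem poch_ne_zero {a : ℝ} (ha : ∀ k : ℕ, a + k ≠ 0) (k : ℕ) : poch a k ≠ 0 := by
  induction k with
  | zero => simp [poch_zero]
  | succ k ih => rw [poch_succ]; exact mul_ne_zero ih (ha k)

theorem sum_range_poch_telescope (a b : ℝ) (ha : ∀ k : ℕ, a + k ≠ 0) (m : ℕ) :
    ∑ k ∈ Finset.range (m + 1),
      poch b k * poch (a + b - 1) k / (poch a k * k.factorial) * (2 * k + a + b - 1)
    = (a + b - 1) * poch (b + 1) m * poch (a + b) m / (poch a m * m.factorial) := by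
  induction m with
  | zero => simp [poch_zero]
  | succ m ih =>
    rw [Finset.sum_range_succ, ih, poch_succ_left b, poch_succ_left (a + b - 1),
      poch_succ a, poch_succ (b + 1), poch_succ (a + b), Nat.factorial_succ,
      show a + b - 1 + 1 = a + b by ring]
    have hpoch := poch_ne_zero ha m
    have hfact : (m.factorial : ℝ) ≠ 0 := by positivity
    have hlast := ha m
    push_cast
    field_simp
    ring

theorem a0_eigenvalue_sum_general (α β : ℝ) (hα : -1 < α) (n : ℕ) (hn : 1 ≤ n) :
    ∑ j ∈ Finset.Icc 1 n,
      poch (β + 2) (j - 1) * poch (α + β + 2) (j - 1) /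
        (poch (α + 1) (j - 1) * Nat.factorial (j - 1)) * (2 * j + α + β)
    = (α + β + 2) * poch (β + 3) (n - 1) * poch (α + β + 3) (n - 1) /
        (poch (α + 1) (n - 1) * Nat.factorial (n - 1)) := by
  obtain ⟨m, rfl⟩ : ∃ m, n = m + 1 := ⟨n - 1, by omega⟩
  have ha : ∀ k : ℕ, α + 1 + k ≠ 0 := fun k =>
    (show 0 < α + 1 + k by linarith [k.cast_nonneg (α := ℝ)]).ne'
  have key := sum_range_poch_telescope (α + 1) (β + 2) ha m
  rw [show α + 1 + (β + 2) - 1 = α + β + 2 by ring, show β + 2 + 1 = β + 3 by ring,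
    show α + 1 + (β + 2) = α + β + 3 by ring] at key
  rw [Nat.add_sub_cancel, ← key, ← Finset.Ico_add_one_right_eq_Icc, Finset.sum_Ico_eq_sum_range]
  refine Finset.sum_congr rfl fun k _ => ?_
  rw [Nat.add_sub_cancel_left]
  push_cast
  ring

/-- `Σ_{j=1}^{n} [(β+2)_{j−1} (α+β+2)_{j−1} / ((α+1)_{j−1} (j−1)!)] (2j+α+β)
 = (α+β+2) (β+3)_{n−1} (α+β+3)_{n−1} / ((α+1)_{n−1} (n−1)!)`. -/
theorem a0_eigenvalue_sum (α β : ℝ) (hα : -1 < α) (hβ : -1 < β) (n : ℕ) (hn : 1 ≤ n) :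
    ∑ j ∈ Finset.Icc 1 n,
      poch (β + 2) (j - 1) * poch (α + β + 2) (j - 1) /
        (poch (α + 1) (j - 1) * Nat.factorial (j - 1)) * (2 * j + α + β)
    = (α + β + 2) * poch (β + 3) (n - 1) * poch (α + β + 3) (n - 1) /
        (poch (α + 1) (n - 1) * Nat.factorial (n - 1)) :=
  a0_eigenvalue_sum_general α β hα n hn
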